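/- Forced zeros in fitting tuples (key step in the proof of Theorem 3): let A be a fitting tuple. For all k, k' ∈ Fin K with k' ≠ k and k' ∉ 𝓡 k, if the message x_{k'} is stored at exactly one sender, say {n ∈ Fin N : k' ∈ 𝓜 n} = {n₀}, then A n k k' = 0 for every sender n ∈ Fin N (in particular A n₀ k k' = 0, even though k' ∈ 𝓜 n₀). -/

import Mathlib

open Finset

def Fits (K N : ℕ) (M : Fin N → Finset (Fin K)) (R : Fin K → Finset (Fin K))
    (A : Fin N → Matrix (Fin K) (Fin K) (ZMod 2)) : Prop :=
  (∀ n k k', A n k k' = 1 → k' ∈ M n) ∧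
  (∀ k, ∑ n, A n k k = 1) ∧
  (∀ k k', k' ≠ k → k' ∉ R k → ∑ n, A n k k' = 0)

namespace Fits

variable {K N : ℕ} {M : Fin N → Finset (Fin K)} {R : Fin K → Finset (Fin K)}
  {A : Fin N → Matrix (Fin K) (Fin K) (ZMod 2)}

theorem apply_eq_zero_of_notMem (hA : Fits K N M R A) {n : Fin N} {k k' : Fin K}
    (h : k' ∉ M n) : A n k k' = 0 := by
  have hne : A n k k' ≠ 1 := fun h1 => h (hA.1 n k k' h1)
  generalize A n k k' = a at hne ⊢
  revert a
  decide

theorem sum_apply_eq_apply_of_unique_mem (hA : Fits K N M R A) {k k' : Fin K} {n₀ : Fin N}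
    (huniq : ∀ n, k' ∈ M n → n = n₀) : ∑ n, A n k k' = A n₀ k k' :=
  sum_eq_single_of_mem n₀ (mem_univ n₀) fun n _ hn =>
    hA.apply_eq_zero_of_notMem fun hmem => hn (huniq n hmem)

end Fits

theorem forced_zeros_general
    (K N : ℕ) (M : Fin N → Finset (Fin K)) (R : Fin K → Finset (Fin K))
    (A : Fin N → Matrix (Fin K) (Fin K) (ZMod 2))
    (hA : Fits K N M R A)
    (k k' : Fin K) (hne : k' ≠ k) (hnR : k' ∉ R k)
    (n₀ : Fin N) (huniq : {n : Fin N | k' ∈ M n} = {n₀}) :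
    ∀ n : Fin N, A n k k' = 0 := by
  have hstored : ∀ n, k' ∈ M n → n = n₀ := fun n hn =>
    Set.mem_singleton_iff.mp (huniq ▸ hn)
  have hn₀ : A n₀ k k' = 0 := by
    rw [← hA.sum_apply_eq_apply_of_unique_mem hstored]
    exact hA.2.2 k k' hne hnR
  intro n
  by_cases hn : n = n₀
  · rw [hn, hn₀]
  · exact hA.apply_eq_zero_of_notMem fun hmem => hn (hstored n hmem)

/-- Forced zeros in fitting tuples: if `k'` is not cached at receiver `k` and
the message `x k'` is stored at exactly one sender `n₀`, then in any fitting
tuple the entry `A n k k'` vanishes for every sender `n`. -/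
theorem forced_zeros
    (K N : ℕ) (M : Fin N → Finset (Fin K)) (R : Fin K → Finset (Fin K))
    (hR : ∀ k, k ∉ R k)
    (A : Fin N → Matrix (Fin K) (Fin K) (ZMod 2))
    (hA : Fits K N M R A)
    (k k' : Fin K) (hne : k' ≠ k) (hnR : k' ∉ R k)
    (n₀ : Fin N) (huniq : {n : Fin N | k' ∈ M n} = {n₀}) :
    ∀ n : Fin N, A n k k' = 0 :=
  forced_zeros_general K N M R A hA k k' hne hnR n₀ huniq
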